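/- Let T be an unambiguous, clean and trim 1-nT computing a continuous partial function f : A^ω ⇀ B^ω. A compatible set C is separable if and only if there exist functions i : C → I and ℓ : C → Q, words u,u',u'' ∈ A* with u' ≠ ε and |u|,|u'|,|u''| ≤ |Q|^{|Q|}, and functions α,α',α'' : C → B* such that: for all q ∈ C, i(q) →^{u|α(q)} ℓ(q) →^{u'|α'(q)} ℓ(q) →^{u''|α''(q)} q; and there exist p,q ∈ C with |α'(p)| ≠ |α'(q)|. -/

import Mathlib

/-- `u` is a prefix of the infinite word `y`. -/
def PrefixOf {B : Type} (u : List B) (y : ℕ → B) : Prop :=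
  ∀ (i : ℕ) (h : i < u.length), u.get ⟨i, h⟩ = y i

/-- Concatenation of a finite word and an infinite word. -/
def listPrepend {B : Type} (u : List B) (y : ℕ → B) : ℕ → B :=
  fun i => if h : i < u.length then u.get ⟨i, h⟩ else y (i - u.length)

/-- The finite word `v` repeated `n` times. -/
def powList {B : Type} (v : List B) (n : ℕ) : List B :=
  (List.replicate n v).flatten

/-- The infinite word `y` equals `u · v^ω` (meaningful when `v ≠ []`). -/
def EqUVomega {B : Type} (u v : List B) (y : ℕ → B) : Prop :=
  ∀ n : ℕ, PrefixOf (u ++ powList v n) y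

/-- A one-way nondeterministic transducer (1-nT). The output function is given on
all triples; it is only relevant on the transition relation. -/
structure NT (A B : Type) where
  Q : Type
  fin : Fintype Q
  I : Set Q
  F : Set Q
  trans : Q → A → Q → Prop
  out : Q → A → Q → List B

attribute [instance] NT.fin

namespace NT

variable {A B : Type}

/-- `FinRun T q u α q'` means `q →^{u|α} q'`. -/
inductive FinRun (T : NT A B) : T.Q → List A → List B → T.Q → Prop
  | nil (q : T.Q) : FinRun T q [] [] q
  | cons {q q' q'' : T.Q} {a : A} {u : List A} {α : List B} :
      T.trans q a q' → FinRun T q' u α q'' →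
      FinRun T q (a :: u) (T.out q a q' ++ α) q''

/-- Infinite run on `x` (the `i`-th transition reads `x i`). -/
def IsRun (T : NT A B) (x : ℕ → A) (ρ : ℕ → T.Q) : Prop :=
  ∀ i : ℕ, T.trans (ρ i) (x i) (ρ (i + 1))

/-- Büchi condition: final states are visited infinitely often. -/
def Final (T : NT A B) (ρ : ℕ → T.Q) : Prop :=
  ∀ i : ℕ, ∃ j : ℕ, i ≤ j ∧ ρ j ∈ T.F

/-- Accepting run: an initial and final run. -/
def Accepting (T : NT A B) (x : ℕ → A) (ρ : ℕ → T.Q) : Prop :=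
  T.IsRun x ρ ∧ ρ 0 ∈ T.I ∧ T.Final ρ

/-- Output along the first `n` transitions of a run. -/
def outPrefix (T : NT A B) (x : ℕ → A) (ρ : ℕ → T.Q) (n : ℕ) : List B :=
  ((List.range n).map (fun i => T.out (ρ i) (x i) (ρ (i + 1)))).flatten

/-- The output along the run is infinite. -/
def InfiniteOutput (T : NT A B) (x : ℕ → A) (ρ : ℕ → T.Q) : Prop :=
  ∀ m : ℕ, ∃ n : ℕ, m ≤ (T.outPrefix x ρ n).length

/-- The (infinite) output along the run equals `y`. -/
def OutEq (T : NT A B) (x : ℕ → A) (ρ : ℕ → T.Q) (y : ℕ → B) : Prop :=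
  ∀ n : ℕ, PrefixOf (T.outPrefix x ρ n) y

/-- Every input labels at most one accepting run. -/
def Unambiguous (T : NT A B) : Prop :=
  ∀ x ρ₁ ρ₂, T.Accepting x ρ₁ → T.Accepting x ρ₂ → ρ₁ = ρ₂

/-- The partial function computed by an unambiguous 1-nT. -/
def Computes (T : NT A B) (f : (ℕ → A) → Option (ℕ → B)) : Prop :=
  ∀ x y, f x = some y ↔
    ∃ ρ, T.Accepting x ρ ∧ T.InfiniteOutput x ρ ∧ T.OutEq x ρ y

/-- Every state occurs in some accepting run. -/
def Trim (T : NT A B) : Prop :=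
  ∀ q : T.Q, ∃ x ρ, T.Accepting x ρ ∧ ∃ i, ρ i = q

/-- The output along every accepting run is infinite. -/
def Clean (T : NT A B) : Prop :=
  ∀ x ρ, T.Accepting x ρ → T.InfiniteOutput x ρ

end NT

/-- Continuity (for the Cantor topology) of a partial function on infinite words. -/
def ContinuousPartial {A B : Type} (f : (ℕ → A) → Option (ℕ → B)) : Prop :=
  ∀ x fx, f x = some fx → ∀ n : ℕ, ∃ p : ℕ, ∀ y fy, f y = some fy →
    (∀ i < p, x i = y i) → ∀ i < n, fx i = fy i

namespace NT

variable {A B : Type}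

/-- A compatible set of states: a common infinite future, one branch of which is final. -/
def Compatible (T : NT A B) (C : Set T.Q) : Prop :=
  ∃ (x : ℕ → A) (ρ : T.Q → ℕ → T.Q),
    (∀ q ∈ C, ρ q 0 = q ∧ T.IsRun x (ρ q)) ∧ ∃ q ∈ C, T.Final (ρ q)

/-- `(C,u,D)` is a pre-step, with predecessor map `pre` and outputs `val`. -/
def PreStepOn (T : NT A B) (C : Set T.Q) (u : List A) (D : Set T.Q)
    (pre : T.Q → T.Q) (val : T.Q → List B) : Prop :=
  T.Compatible C ∧ T.Compatible D ∧
  (∀ q ∈ D, pre q ∈ C ∧ T.FinRun (pre q) u (val q) q) ∧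
  (∀ q ∈ D, ∀ p ∈ C, (∃ α, T.FinRun p u α q) → p = pre q)

/-- `(C,u,D)` is a step: a pre-step with surjective predecessor map. -/
def StepOn (T : NT A B) (C : Set T.Q) (u : List A) (D : Set T.Q)
    (pre : T.Q → T.Q) (val : T.Q → List B) : Prop :=
  T.PreStepOn C u D pre val ∧ ∀ p ∈ C, ∃ q ∈ D, pre q = p

/-- `(J,u,C)` is an initial step. -/
def InitStepOn (T : NT A B) (J : Set T.Q) (u : List A) (C : Set T.Q)
    (pre : T.Q → T.Q) (val : T.Q → List B) : Prop :=
  J ⊆ T.I ∧ T.StepOn J u C pre val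

/-- `com` is the longest common prefix of the `val q` (`q ∈ C`) and
`adv q` is the advance of `q`, i.e. `val q = com ++ adv q`. -/
def AdvData (T : NT A B) (C : Set T.Q) (val : T.Q → List B)
    (com : List B) (adv : T.Q → List B) : Prop :=
  (∀ q ∈ C, val q = com ++ adv q) ∧
  (∀ c : List B, (∀ q ∈ C, c <+: val q) → c <+: com)

end NT

namespace NT

variable {A B : Type}

/-- `M := max(10, maximal length of a transition output)`. -/
def bigM (T : NT A B) [Fintype A] : ℕ :=
  max 10 (Finset.univ.sup fun p : T.Q × A × T.Q => (T.out p.1 p.2.1 p.2.2).length)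

/-- `Ω := M · |Q|^|Q|`. -/
def Omega (T : NT A B) [Fintype A] : ℕ :=
  T.bigM * Fintype.card T.Q ^ Fintype.card T.Q

/-- A compatible set is separable if it is reached by an initial step two of whose
advances have lengths differing by more than `Ω`. -/
def Separable (T : NT A B) [Fintype A] (C : Set T.Q) : Prop :=
  ∃ (J : Set T.Q) (u : List A) (pre : T.Q → T.Q) (val : T.Q → List B)
    (com : List B) (adv : T.Q → List B),
    T.InitStepOn J u C pre val ∧ T.AdvData C val com adv ∧
    ∃ p ∈ C, ∃ q ∈ C, (adv q).length + T.Omega < (adv p).length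

end NT

/-!
Both sides are equivalent to the existence of a single word leading from initial states to every
`q ∈ C` such that the outputs of two states of `C` differ in length by more than `Ω`: the advances
of an initial step differ exactly as its values do, and conversely the predecessors of such runs
form an initial step, compatible because their runs can be glued to a common future of `C`, and
with unique predecessors because the trim transducer is unambiguous.

Along such a word the difference of the output lengths of `p` and `q` grows by at most `M` per
letter, so it first exceeds the levels `0, M, …, |Q|^|Q| M` at `|Q|^|Q| + 1` increasing positions
with increasing values. Two of these positions carry the same tuple of states, which gives a loop on
which `p` and `q` output words of different lengths. Words and loops longer than `|Q|^|Q|` contain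
two positions with the same tuple of states; cutting out the segment between them keeps the
endpoints, and for a loop either the segment or the rest is still unbalanced. Conversely, pumping an
unbalanced loop often enough produces a gap larger than `Ω`.
-/

lemma powList_succ {β : Type} (v : List β) (n : ℕ) : powList v (n + 1) = v ++ powList v n := by
  simp [powList, List.replicate_succ]

lemma length_powList {β : Type} (v : List β) (n : ℕ) : (powList v n).length = n * v.length := by
  simp [powList, List.sum_replicate]

lemma exists_lt_le_card_map_eq {α : Type*} [Fintype α] (F : ℕ → α) :
    ∃ i j, i < j ∧ j ≤ Fintype.card α ∧ F i = F j := by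
  obtain ⟨i, j, hij, heq⟩ :=
    Fintype.exists_ne_map_eq_of_card_lt (fun k : Fin (Fintype.card α + 1) => F k) (by simp)
  rcases Fin.lt_or_lt_of_ne hij with h | h
  · exact ⟨i, j, h, Nat.lt_succ_iff.mp j.isLt, heq⟩
  · exact ⟨j, i, h, Nat.lt_succ_iff.mp i.isLt, heq.symm⟩

lemma exists_increasing_crossings {d : ℕ → ℤ} {M K n : ℕ} (h0 : d 0 = 0)
    (hstep : ∀ t, d (t + 1) ≤ d t + M) (hn : (K * M : ℤ) < d n) :
    ∃ s : ℕ → ℕ, ∀ i j, i < j → j ≤ K → s i < s j ∧ s j ≤ n ∧ d (s i) < d (s j) := by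
  classical
  have hfirst : ∀ j ≤ K, ∃ t ≤ n, (j * M : ℤ) < d t ∧ ∀ t' < t, d t' ≤ j * M := by
    intro j hj
    have hex : ∃ t, (j * M : ℤ) < d t := ⟨n, lt_of_le_of_lt (by gcongr) hn⟩
    exact ⟨Nat.find hex, Nat.find_min' hex (lt_of_le_of_lt (by gcongr) hn),
      Nat.find_spec hex, fun t' ht' => not_lt.mp (Nat.find_min hex ht')⟩
  choose! s hsn hsup hsmin using hfirst
  refine ⟨s, fun i j hij hjK => ?_⟩
  have hiK : i ≤ K := by omega
  have hpos : 0 < s i := Nat.pos_of_ne_zero fun h => by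
    have := hsup i hiK
    rw [h, h0] at this
    exact absurd this (not_lt.mpr (by positivity))
  have hsi : d (s i) ≤ i * M + M := by
    have := hstep (s i - 1)
    rw [Nat.sub_add_cancel hpos] at this
    linarith [hsmin i hiK (s i - 1) (by omega)]
  have hlevels : ((i + 1) * M : ℤ) ≤ j * M := by exact_mod_cast Nat.mul_le_mul_right M hij
  have hval : d (s i) < d (s j) := by linarith [hsup j hjK]
  have hle : s i ≤ s j := not_lt.mp fun h => by
    linarith [hsmin i hiK (s j) h, hsup j hjK, (by positivity : (0 : ℤ) ≤ M)]
  exact ⟨lt_of_le_of_ne hle fun h => hval.ne (congrArg d h), hsn j hjK, hval⟩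

namespace NT

variable {A B : Type} {T : NT A B}

lemma FinRun.append {p q r : T.Q} {u v : List A} {α β : List B}
    (h₁ : T.FinRun p u α q) (h₂ : T.FinRun q v β r) : T.FinRun p (u ++ v) (α ++ β) r := by
  induction h₁ with
  | nil => simpa using h₂
  | cons ht _ ih => simpa only [List.cons_append, List.append_assoc] using FinRun.cons ht (ih h₂)

lemma FinRun.powList {q : T.Q} {u : List A} {α : List B} (h : T.FinRun q u α q) :
    ∀ n, T.FinRun q (powList u n) (powList α n) q
  | 0 => FinRun.nil q
  | n + 1 => by simpa only [powList_succ] using h.append (h.powList n)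

/-- A finite run encoded by its sequence of states, so that it can be cut at arbitrary positions. -/
def RunOn (T : NT A B) (w : List A) (r : ℕ → T.Q) : Prop :=
  ∀ i (h : i < w.length), T.trans (r i) w[i] (r (i + 1))

def stepOut (T : NT A B) (w : List A) (r : ℕ → T.Q) (i : ℕ) : List B :=
  if h : i < w.length then T.out (r i) w[i] (r (i + 1)) else []

def runOut (T : NT A B) (w : List A) (r : ℕ → T.Q) (a b : ℕ) : List B :=
  ((List.range' a (b - a)).map (T.stepOut w r)).flatten

section runOut

variable {w : List A} {r : ℕ → T.Q}

@[simp] lemma runOut_self (a : ℕ) : T.runOut w r a a = [] := by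
  simp [runOut]

lemma runOut_append {a b c : ℕ} (hab : a ≤ b) (hbc : b ≤ c) :
    T.runOut w r a b ++ T.runOut w r b c = T.runOut w r a c := by
  obtain ⟨m, rfl⟩ := Nat.exists_eq_add_of_le hab
  obtain ⟨n, rfl⟩ := Nat.exists_eq_add_of_le hbc
  simp only [runOut, Nat.add_assoc, Nat.add_sub_add_left, Nat.add_sub_cancel_left,
    ← List.flatten_append, ← List.map_append, List.range'_append_1]

lemma runOut_succ {a b : ℕ} (hab : a ≤ b) :
    T.runOut w r a (b + 1) = T.runOut w r a b ++ T.stepOut w r b := by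
  rw [← runOut_append hab b.le_succ]
  simp [runOut]

lemma length_stepOut_le_bigM [Fintype A] (i : ℕ) : (T.stepOut w r i).length ≤ T.bigM := by
  unfold stepOut
  split_ifs with h
  · exact le_max_of_le_right <| Finset.le_sup (f := fun p : T.Q × A × T.Q =>
      (T.out p.1 p.2.1 p.2.2).length) (Finset.mem_univ (r i, w[i], r (i + 1)))
  · exact Nat.zero_le _

lemma RunOn.finRun_slice (hr : T.RunOn w r) {a b : ℕ} (hab : a ≤ b) (hb : b ≤ w.length) :
    T.FinRun (r a) ((w.drop a).take (b - a)) (T.runOut w r a b) (r b) := by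
  induction b, hab using Nat.le_induction with
  | base => simpa using FinRun.nil (r a)
  | succ b hab ih =>
    have hb' : b < w.length := hb
    have hslice : (w.drop a).take (b + 1 - a) = (w.drop a).take (b - a) ++ [w[b]] := by
      rw [show b + 1 - a = b - a + 1 by omega, List.take_add_one,
        List.getElem?_eq_getElem (by simp; omega)]
      simp [show a + (b - a) = b by omega]
    rw [hslice, runOut_succ hab, stepOut, dif_pos hb']
    exact (ih hb'.le).append (by simpa using FinRun.cons (hr b hb') (FinRun.nil _))

lemma RunOn.finRun_take (hr : T.RunOn w r) {a : ℕ} (ha : a ≤ w.length) :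
    T.FinRun (r 0) (w.take a) (T.runOut w r 0 a) (r a) := by
  simpa using hr.finRun_slice a.zero_le ha

lemma RunOn.finRun_drop (hr : T.RunOn w r) {b : ℕ} (hb : b ≤ w.length) :
    T.FinRun (r b) (w.drop b) (T.runOut w r b w.length) (r w.length) := by
  simpa [List.take_of_length_le] using hr.finRun_slice hb le_rfl

lemma RunOn.finRun_cut (hr : T.RunOn w r) {a b : ℕ} (hab : a ≤ b) (hb : b ≤ w.length)
    (hloop : r a = r b) :
    T.FinRun (r 0) (w.take a ++ w.drop b) (T.runOut w r 0 a ++ T.runOut w r b w.length)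
      (r w.length) :=
  (hr.finRun_take (hab.trans hb)).append (hloop ▸ hr.finRun_drop hb)

end runOut

lemma runOut_cons (a : A) (u : List A) (p : T.Q) (r : ℕ → T.Q) (i j : ℕ) :
    T.runOut (a :: u) (fun k => Nat.casesOn k p r) (i + 1) (j + 1) = T.runOut u r i j := by
  simp only [runOut, Nat.add_sub_add_right]
  rw [Nat.add_comm i 1, ← List.map_add_range', List.map_map]
  congr 2
  funext k
  simp [stepOut, Nat.add_comm 1 k]

lemma FinRun.exists_runOn {p q : T.Q} {w : List A} {α : List B} (h : T.FinRun p w α q) :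
    ∃ r : ℕ → T.Q, T.RunOn w r ∧ r 0 = p ∧ r w.length = q ∧ T.runOut w r 0 w.length = α := by
  induction h with
  | nil p => exact ⟨fun _ => p, fun i hi => absurd hi (by simp), rfl, rfl, by simp⟩
  | @cons p p' _ a u α ht _ ih =>
    obtain ⟨r, hr, h0, hend, hout⟩ := ih
    refine ⟨fun i => Nat.casesOn i p r, ?_, rfl, hend, ?_⟩
    · rintro (_ | i) hi
      · simpa [h0] using ht
      · simpa using hr i (by simpa using hi)
    · rw [List.length_cons, ← runOut_append (Nat.zero_le 1) (by omega), runOut_cons, hout]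
      simp [runOut, stepOut, h0]

lemma exists_runOn_family {C : Set T.Q} {g h : T.Q → T.Q} {w : List A} {β : T.Q → List B}
    (hβ : ∀ q ∈ C, T.FinRun (g q) w (β q) (h q)) :
    ∃ R : T.Q → ℕ → T.Q, (∀ q ∈ C, T.RunOn w (R q) ∧ R q 0 = g q ∧ R q w.length = h q) ∧
      ∀ q ∈ C, T.runOut w (R q) 0 w.length = β q := by
  classical
  refine ⟨fun q => if hq : q ∈ C then (hβ q hq).exists_runOn.choose else fun _ => q,
    fun q hq => ?_, fun q hq => ?_⟩ <;>
  simp [dif_pos hq, (hβ q hq).exists_runOn.choose_spec]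

def Reaches (T : NT A B) (C : Set T.Q) (g : T.Q → T.Q) (w : List A) (h : T.Q → T.Q) : Prop :=
  ∀ q ∈ C, ∃ β, T.FinRun (g q) w β (h q)

lemma Reaches.append {C : Set T.Q} {g h k : T.Q → T.Q} {u v : List A}
    (h₁ : T.Reaches C g u h) (h₂ : T.Reaches C h v k) : T.Reaches C g (u ++ v) k := by
  intro q hq
  obtain ⟨α, hα⟩ := h₁ q hq
  obtain ⟨β, hβ⟩ := h₂ q hq
  exact ⟨α ++ β, hα.append hβ⟩

lemma Reaches.exists_outputs {C : Set T.Q} {g h : T.Q → T.Q} {w : List A}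
    (hw : T.Reaches C g w h) : ∃ β : T.Q → List B, ∀ q ∈ C, T.FinRun (g q) w (β q) (h q) := by
  choose! β hβ using hw
  exact ⟨β, hβ⟩

lemma RunOn.decompose {C : Set T.Q} {g h : T.Q → T.Q} {w : List A} {R : T.Q → ℕ → T.Q}
    (hR : ∀ q ∈ C, T.RunOn w (R q) ∧ R q 0 = g q ∧ R q w.length = h q) {a b : ℕ} (hab : a ≤ b)
    (hb : b ≤ w.length) (hloop : ∀ q, R q a = R q b) :
    T.Reaches C g (w.take a) (fun q => R q a) ∧
      (∀ q ∈ C, T.FinRun (R q a) ((w.drop a).take (b - a)) (T.runOut w (R q) a b) (R q a)) ∧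
      T.Reaches C (fun q => R q a) (w.drop b) h := by
  refine ⟨fun q hq => ?_, fun q hq => ?_, fun q hq => ?_⟩ <;> obtain ⟨hr, h0, hend⟩ := hR q hq
  · exact ⟨_, h0 ▸ hr.finRun_take (hab.trans hb)⟩
  · simpa only [← hloop q] using hr.finRun_slice hab hb
  · exact ⟨_, hend ▸ hloop q ▸ hr.finRun_drop hb⟩

lemma Reaches.exists_short {C : Set T.Q} {g h : T.Q → T.Q} {w : List A}
    (hw : T.Reaches C g w h) :
    ∃ w' : List A, w'.length ≤ Fintype.card T.Q ^ Fintype.card T.Q ∧ T.Reaches C g w' h := by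
  classical
  induction hn : w.length using Nat.strong_induction_on generalizing w with
  | _ n ih =>
  by_cases hK : n ≤ Fintype.card T.Q ^ Fintype.card T.Q
  · exact ⟨w, hn ▸ hK, hw⟩
  obtain ⟨β, hβ⟩ := hw.exists_outputs
  obtain ⟨R, hR, -⟩ := exists_runOn_family hβ
  obtain ⟨a, b, hab, hbK, hloop⟩ := exists_lt_le_card_map_eq fun t q => R q t
  rw [Fintype.card_fun] at hbK
  refine ih _ (by simp; omega) (w := w.take a ++ w.drop b) (fun q hq => ?_) rfl
  obtain ⟨hr, h0, hend⟩ := hR q hq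
  exact ⟨_, h0 ▸ hend ▸ hr.finRun_cut hab.le (by omega) (congrFun hloop q)⟩

lemma exists_unbalanced_loop [Fintype A] {C : Set T.Q} {g h : T.Q → T.Q} {w : List A}
    {β : T.Q → List B} (hβ : ∀ q ∈ C, T.FinRun (g q) w (β q) (h q)) {p q : T.Q} (hp : p ∈ C)
    (hq : q ∈ C) (hgap : (β q).length + T.Omega < (β p).length) :
    ∃ (x v z : List A) (l : T.Q → T.Q) (γ : T.Q → List B), T.Reaches C g x l ∧
      (∀ r ∈ C, T.FinRun (l r) v (γ r) (l r)) ∧ T.Reaches C l z h ∧ v ≠ [] ∧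
      (γ p).length ≠ (γ q).length := by
  classical
  obtain ⟨R, hR, hout⟩ := exists_runOn_family hβ
  set d : ℕ → ℤ := fun t => ((T.runOut w (R p) 0 t).length : ℤ) - (T.runOut w (R q) 0 t).length
  have hstep : ∀ t, d (t + 1) ≤ d t + T.bigM := fun t => by
    have := T.length_stepOut_le_bigM (w := w) (r := R p) t
    simp only [d, runOut_succ t.zero_le, List.length_append]
    omega
  have hgap' : ((Fintype.card T.Q ^ Fintype.card T.Q * T.bigM : ℕ) : ℤ) < d w.length := by
    simp only [d, hout p hp, hout q hq]
    rw [Omega, Nat.mul_comm] at hgap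
    omega
  obtain ⟨s, hs⟩ := exists_increasing_crossings (by simp [d]) hstep (by exact_mod_cast hgap')
  obtain ⟨i, j, hij, hjK, hloop⟩ := exists_lt_le_card_map_eq fun k r => R r (s k)
  rw [Fintype.card_fun] at hjK
  obtain ⟨hlt, hsj, hd⟩ := hs i j hij hjK
  obtain ⟨hx, hv, hz⟩ := RunOn.decompose hR hlt.le hsj (congrFun hloop)
  refine ⟨_, _, _, _, _, hx, hv, hz, List.ne_nil_of_length_pos (by simp; omega), fun heq => ?_⟩
  have hp' := congrArg List.length (runOut_append (w := w) (r := R p) (s i).zero_le hlt.le)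
  have hq' := congrArg List.length (runOut_append (w := w) (r := R q) (s i).zero_le hlt.le)
  simp only [List.length_append] at hp' hq'
  simp only [d] at hd
  omega

lemma exists_short_unbalanced_loop {C : Set T.Q} {l : T.Q → T.Q} {v : List A}
    {γ : T.Q → List B} (hγ : ∀ r ∈ C, T.FinRun (l r) v (γ r) (l r)) (hv : v ≠ [])
    {p q : T.Q} (hp : p ∈ C) (hq : q ∈ C) (hpq : (γ p).length ≠ (γ q).length) :
    ∃ (x v' z : List A) (l' : T.Q → T.Q) (γ' : T.Q → List B), T.Reaches C l x l' ∧
      (∀ r ∈ C, T.FinRun (l' r) v' (γ' r) (l' r)) ∧ T.Reaches C l' z l ∧ v' ≠ [] ∧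
      v'.length ≤ Fintype.card T.Q ^ Fintype.card T.Q ∧ (γ' p).length ≠ (γ' q).length := by
  classical
  induction hn : v.length using Nat.strong_induction_on generalizing v γ with
  | _ n ih =>
  by_cases hK : n ≤ Fintype.card T.Q ^ Fintype.card T.Q
  · exact ⟨[], v, [], l, γ, fun r _ => ⟨[], .nil _⟩, hγ, fun r _ => ⟨[], .nil _⟩, hv, hn ▸ hK, hpq⟩
  obtain ⟨R, hR, hout⟩ := exists_runOn_family hγ
  obtain ⟨a, b, hab, hbK, hloop⟩ := exists_lt_le_card_map_eq fun t r => R r t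
  rw [Fintype.card_fun] at hbK
  have hb : b ≤ v.length := by omega
  obtain ⟨hx, hmid, hz⟩ := RunOn.decompose hR hab.le hb (congrFun hloop)
  by_cases hmid_pq : (T.runOut v (R p) a b).length ≠ (T.runOut v (R q) a b).length
  · exact ⟨_, _, _, _, _, hx, hmid, hz, List.ne_nil_of_length_pos (by simp; omega),
      by simp; omega, hmid_pq⟩
  -- the loop with the segment `[a, b)` cut out is still unbalanced, and shorter
  have hlen : ∀ r ∈ C, (γ r).length = (T.runOut v (R r) 0 a).length +
      (T.runOut v (R r) a b).length + (T.runOut v (R r) b v.length).length := fun r hr => by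
    rw [← hout r hr, ← runOut_append (Nat.zero_le b) hb, ← runOut_append (Nat.zero_le a) hab.le]
    simp only [List.length_append]
  refine ih _ (by simp; omega) (v := v.take a ++ v.drop b)
    (γ := fun r => T.runOut v (R r) 0 a ++ T.runOut v (R r) b v.length) (fun r hr => ?_)
    (List.ne_nil_of_length_pos (by simp; omega)) ?_ rfl
  · obtain ⟨hr, h0, hend⟩ := hR r hr
    simpa only [h0, hend] using hr.finRun_cut hab.le hb (congrFun hloop r)
  · have := hlen p hp
    have := hlen q hq
    simp only [List.length_append]
    omega

lemma FinRun.glue {p q : T.Q} {w : List A} {β : List B} (h : T.FinRun p w β q) {x : ℕ → A}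
    {σ : ℕ → T.Q} (hσ : T.IsRun x σ) (hσ0 : σ 0 = q) :
    ∃ τ : ℕ → T.Q, τ 0 = p ∧ T.IsRun (listPrepend w x) τ ∧ (T.Final σ → T.Final τ) := by
  induction h with
  | nil q => exact ⟨σ, hσ0, by simpa [IsRun, listPrepend] using hσ, id⟩
  | @cons p p' _ a u α ht _ ih =>
    obtain ⟨τ, hτ0, hτ, hfin⟩ := ih hσ0
    refine ⟨fun i => Nat.casesOn i p τ, rfl, ?_, fun hf i => ?_⟩
    · rintro (_ | i)
      · simpa [listPrepend, hτ0] using ht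
      · simpa [listPrepend] using hτ i
    · obtain ⟨j, hij, hj⟩ := hfin hf i
      exact ⟨j + 1, by omega, hj⟩

lemma Trim.exists_final_run (hTr : T.Trim) (q : T.Q) :
    ∃ (z : ℕ → A) (σ : ℕ → T.Q), σ 0 = q ∧ T.IsRun z σ ∧ T.Final σ := by
  obtain ⟨x, ρ, ⟨hrun, -, hfin⟩, k, rfl⟩ := hTr q
  refine ⟨fun i => x (k + i), fun i => ρ (k + i), rfl, fun i => hrun (k + i), fun i => ?_⟩
  obtain ⟨j, hj, hF⟩ := hfin (k + i)
  exact ⟨j - k, by omega, show ρ (k + (j - k)) ∈ T.F by rwa [Nat.add_sub_cancel' (by omega)]⟩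

/-- Both runs extend, by a final run out of `q`, to accepting runs on the same input. -/
lemma Unambiguous.eq_of_finRun (hU : T.Unambiguous) (hTr : T.Trim) {w : List A}
    {p₁ p₂ q : T.Q} {α₁ α₂ : List B} (hp₁ : p₁ ∈ T.I) (hp₂ : p₂ ∈ T.I)
    (h₁ : T.FinRun p₁ w α₁ q) (h₂ : T.FinRun p₂ w α₂ q) : p₁ = p₂ := by
  obtain ⟨z, σ, hσ0, hσ, hfin⟩ := hTr.exists_final_run q
  obtain ⟨τ₁, hτ₁0, hτ₁, hfin₁⟩ := h₁.glue hσ hσ0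
  obtain ⟨τ₂, hτ₂0, hτ₂, hfin₂⟩ := h₂.glue hσ hσ0
  have := hU _ _ _ ⟨hτ₁, hτ₁0 ▸ hp₁, hfin₁ hfin⟩ ⟨hτ₂, hτ₂0 ▸ hp₂, hfin₂ hfin⟩
  rw [← hτ₁0, ← hτ₂0, this]

lemma Compatible.image {C : Set T.Q} (hC : T.Compatible C) {g : T.Q → T.Q} {w : List A}
    (hw : ∀ q ∈ C, ∃ β, T.FinRun (g q) w β q) : T.Compatible (g '' C) := by
  obtain ⟨x, ρ, hρ, q₀, hq₀, hfin⟩ := hC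
  have : Nonempty T.Q := ⟨q₀⟩
  have hglue : ∀ q ∈ C, ∃ τ : ℕ → T.Q, τ 0 = g q ∧ T.IsRun (listPrepend w x) τ ∧
      (T.Final (ρ q) → T.Final τ) := fun q hq => by
    obtain ⟨β, hβ⟩ := hw q hq
    exact hβ.glue (hρ q hq).2 (hρ q hq).1
  choose! τ hτ0 hτ hτfin using hglue
  -- each `j ∈ g '' C` follows the run of a preimage, chosen to be `q₀` for `j = g q₀`
  have hpre : ∀ j ∈ g '' C, ∃ q ∈ C, g q = j ∧ (j = g q₀ → q = q₀) := by
    rintro j ⟨q, hq, rfl⟩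
    by_cases hj : g q = g q₀
    · exact ⟨q₀, hq₀, hj.symm, fun _ => rfl⟩
    · exact ⟨q, hq, rfl, fun h => absurd h hj⟩
  choose! s hsC hsg hs₀ using hpre
  refine ⟨listPrepend w x, fun j => τ (s j), fun j hj => ⟨?_, hτ _ (hsC j hj)⟩,
    g q₀, ⟨q₀, hq₀, rfl⟩, ?_⟩
  · exact (hτ0 _ (hsC j hj)).trans (hsg j hj)
  · simpa only [hs₀ _ ⟨q₀, hq₀, rfl⟩ rfl] using hτfin q₀ hq₀ hfin

lemma exists_advData {C : Set T.Q} (val : T.Q → List B) {p : T.Q} (hp : p ∈ C) :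
    ∃ com adv, T.AdvData C val com adv := by
  classical
  let P : ℕ → Prop := fun m => ∀ q ∈ C, (val p).take m <+: val q
  let m := Nat.findGreatest P (val p).length
  have hm : P m := Nat.findGreatest_spec (P := P) (Nat.zero_le _) fun q _ => by simp
  refine ⟨(val p).take m, fun q => (val q).drop m, fun q hq => ?_, fun c hc => ?_⟩
  · have hlen : ((val p).take m).length = m := by simp [m, Nat.findGreatest_le]
    have htake := List.prefix_iff_eq_take.mp (hm q hq)
    rw [hlen] at htake
    rw [htake, List.take_append_drop]
  · have hceq := List.prefix_iff_eq_take.mp (hc p hp)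
    have hcm : c.length ≤ m :=
      Nat.le_findGreatest (hc p hp).length_le fun q hq => hceq ▸ hc q hq
    rw [hceq]
    exact List.take_prefix_take_left hcm

lemma AdvData.length_val {C : Set T.Q} {val : T.Q → List B} {com : List B}
    {adv : T.Q → List B} (h : T.AdvData C val com adv) {q : T.Q} (hq : q ∈ C) :
    (val q).length = com.length + (adv q).length := by
  rw [h.1 q hq, List.length_append]

def ReachableWithGap (T : NT A B) [Fintype A] (C : Set T.Q) : Prop :=
  ∃ (i : T.Q → T.Q) (w : List A) (val : T.Q → List B),
    (∀ q ∈ C, i q ∈ T.I ∧ T.FinRun (i q) w (val q) q) ∧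
    ∃ p ∈ C, ∃ q ∈ C, (val q).length + T.Omega < (val p).length

lemma separable_iff_reachableWithGap [Fintype A] (hU : T.Unambiguous) (hTr : T.Trim)
    {C : Set T.Q} (hC : T.Compatible C) : T.Separable C ↔ T.ReachableWithGap C := by
  constructor
  · rintro ⟨J, w, pre, val, com, adv, ⟨hJI, ⟨-, -, hrun, -⟩, -⟩, hadv, p, hp, q, hq, hgap⟩
    refine ⟨pre, w, val, fun q hq => ⟨hJI (hrun q hq).1, (hrun q hq).2⟩, p, hp, q, hq, ?_⟩
    rw [hadv.length_val hp, hadv.length_val hq]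
    omega
  · rintro ⟨i, w, val, hrun, p, hp, q, hq, hgap⟩
    obtain ⟨com, adv, hadv⟩ := exists_advData val hp
    have hJI : i '' C ⊆ T.I := by
      rintro _ ⟨q, hq, rfl⟩
      exact (hrun q hq).1
    have hpre : ∀ q ∈ C, ∀ j ∈ i '' C, (∃ α, T.FinRun j w α q) → j = i q :=
      fun q hq j hj ⟨_, hα⟩ => hU.eq_of_finRun hTr (hJI hj) (hrun q hq).1 hα (hrun q hq).2
    have hsurj : ∀ j ∈ i '' C, ∃ q ∈ C, i q = j := fun _ ⟨q, hq, hj⟩ => ⟨q, hq, hj⟩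
    have hstep : T.InitStepOn (i '' C) w C i val :=
      ⟨hJI, ⟨hC.image fun q hq => ⟨_, (hrun q hq).2⟩, hC,
        fun q hq => ⟨⟨q, hq, rfl⟩, (hrun q hq).2⟩, hpre⟩, hsurj⟩
    rw [hadv.length_val hp, hadv.length_val hq] at hgap
    exact ⟨i '' C, w, i, val, com, adv, hstep, hadv, p, hp, q, hq, by omega⟩

lemma ReachableWithGap.exists_pumping [Fintype A] {C : Set T.Q} (h : T.ReachableWithGap C) :
    ∃ (iF lF : T.Q → T.Q) (u u' u'' : List A) (α α' α'' : T.Q → List B),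
      (∀ q ∈ C, iF q ∈ T.I ∧ T.FinRun (iF q) u (α q) (lF q) ∧
        T.FinRun (lF q) u' (α' q) (lF q) ∧ T.FinRun (lF q) u'' (α'' q) q) ∧
      u' ≠ [] ∧ u.length ≤ Fintype.card T.Q ^ Fintype.card T.Q ∧
      u'.length ≤ Fintype.card T.Q ^ Fintype.card T.Q ∧
      u''.length ≤ Fintype.card T.Q ^ Fintype.card T.Q ∧
      ∃ p ∈ C, ∃ q ∈ C, (α' p).length ≠ (α' q).length := by
  obtain ⟨i, w, val, hrun, p, hp, q, hq, hgap⟩ := h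
  obtain ⟨x, v, z, l, γ, hx, hv, hz, hvne, hγ⟩ :=
    exists_unbalanced_loop (h := id) (fun r hr => (hrun r hr).2) hp hq hgap
  obtain ⟨x', v', z', l', γ', hx', hv', hz', hv'ne, hv'K, hγ'⟩ :=
    exists_short_unbalanced_loop hv hvne hp hq hγ
  obtain ⟨u, hu, hreach⟩ := (hx.append hx').exists_short
  obtain ⟨u'', hu'', hreach''⟩ := (hz'.append hz).exists_short
  obtain ⟨α, hα⟩ := hreach.exists_outputs
  obtain ⟨α'', hα''⟩ := hreach''.exists_outputs
  exact ⟨i, l', u, v', u'', α, γ', α'', fun r hr => ⟨(hrun r hr).1, hα r hr, hv' r hr, hα'' r hr⟩,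
    hv'ne, hu, hv'K, hu'', p, hp, q, hq, hγ'⟩

lemma reachableWithGap_of_pumping [Fintype A] {C : Set T.Q} {i l : T.Q → T.Q}
    {u u' u'' : List A} {α α' α'' : T.Q → List B}
    (hruns : ∀ q ∈ C, i q ∈ T.I ∧ T.FinRun (i q) u (α q) (l q) ∧
      T.FinRun (l q) u' (α' q) (l q) ∧ T.FinRun (l q) u'' (α'' q) q)
    {p q : T.Q} (hp : p ∈ C) (hq : q ∈ C) (hpq : (α' p).length ≠ (α' q).length) :
    T.ReachableWithGap C := by
  wlog hlt : (α' q).length < (α' p).length generalizing p q with H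
  · exact H hq hp hpq.symm (by omega)
  -- after `N` iterations of the loop the output of `p` is ahead by at least `N`, which exceeds
  -- `Ω` plus the outputs of `q` outside the loop
  set N := T.Omega + (α q).length + (α'' q).length + 1
  refine ⟨i, u ++ powList u' N ++ u'', fun r => α r ++ powList (α' r) N ++ α'' r,
    fun r hr => ?_, p, hp, q, hq, ?_⟩
  · obtain ⟨hI, h₁, h₂, h₃⟩ := hruns r hr
    exact ⟨hI, (h₁.append (h₂.powList N)).append h₃⟩
  · have : N * (α' q).length + N ≤ N * (α' p).length := Nat.mul_le_mul_left N hlt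
    simp only [List.length_append, length_powList]
    omega

end NT

theorem separable_characterization_general
    {A B : Type} [Fintype A]
    (T : NT A B)
    (hU : T.Unambiguous) (hTr : T.Trim)
    (C : Set T.Q) (hC : T.Compatible C) :
    T.Separable C ↔
    ∃ (iF lF : T.Q → T.Q) (u u' u'' : List A) (α α' α'' : T.Q → List B),
      (∀ q ∈ C, iF q ∈ T.I ∧
        T.FinRun (iF q) u (α q) (lF q) ∧
        T.FinRun (lF q) u' (α' q) (lF q) ∧
        T.FinRun (lF q) u'' (α'' q) q) ∧
      u' ≠ [] ∧
      u.length ≤ Fintype.card T.Q ^ Fintype.card T.Q ∧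
      u'.length ≤ Fintype.card T.Q ^ Fintype.card T.Q ∧
      u''.length ≤ Fintype.card T.Q ^ Fintype.card T.Q ∧
      ∃ p ∈ C, ∃ q ∈ C, (α' p).length ≠ (α' q).length := by
  rw [NT.separable_iff_reachableWithGap hU hTr hC]
  refine ⟨NT.ReachableWithGap.exists_pumping, ?_⟩
  rintro ⟨iF, lF, u, u', u'', α, α', α'', hruns, -, -, -, -, p, hp, q, hq, hpq⟩
  exact NT.reachableWithGap_of_pumping hruns hp hq hpq

/-- Pumping characterization of separable compatible sets. -/
theorem separable_characterization
    {A B : Type} [Fintype A] [Fintype B]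
    (T : NT A B) (f : (ℕ → A) → Option (ℕ → B))
    (hU : T.Unambiguous) (hCl : T.Clean) (hTr : T.Trim)
    (hT : T.Computes f) (hcont : ContinuousPartial f)
    (C : Set T.Q) (hC : T.Compatible C) :
    T.Separable C ↔
    ∃ (iF lF : T.Q → T.Q) (u u' u'' : List A) (α α' α'' : T.Q → List B),
      (∀ q ∈ C, iF q ∈ T.I ∧
        T.FinRun (iF q) u (α q) (lF q) ∧
        T.FinRun (lF q) u' (α' q) (lF q) ∧
        T.FinRun (lF q) u'' (α'' q) q) ∧
      u' ≠ [] ∧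
      u.length ≤ Fintype.card T.Q ^ Fintype.card T.Q ∧
      u'.length ≤ Fintype.card T.Q ^ Fintype.card T.Q ∧
      u''.length ≤ Fintype.card T.Q ^ Fintype.card T.Q ∧
      ∃ p ∈ C, ∃ q ∈ C, (α' p).length ≠ (α' q).length :=
  separable_characterization_general T hU hTr C hC
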